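/- arXiv:2001.00753 — 3 statements merged into one kernel-verified Lean document; each statement's English description precedes it below -/
import Mathlib

section
/- Let X ⊆ ℝ^m be a closed set and f : X → ℝ^n a Lipschitz map. If the induced pullback map on Lipschitz functions V(f) : V(ℝ^n) → V(X), h ↦ h ∘ f, is surjective, then f(X) is closed and f : X → f(X) is bi-Lipschitz (i.e., f is a bi-Lipschitz embedding). -/
open Metric Set Filter

noncomputable section

abbrev E (n : ℕ) := EuclideanSpace ℝ (Fin n)

/-- Semialgebraic subsets of ℝⁿ: the boolean algebra generated by polynomial
equalities and inequalities. -/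
inductive IsSemialgebraic (n : ℕ) : Set (E n) → Prop
  | zero (p : MvPolynomial (Fin n) ℝ) :
      IsSemialgebraic n {x | MvPolynomial.eval (fun i => x i) p = 0}
  | pos (p : MvPolynomial (Fin n) ℝ) :
      IsSemialgebraic n {x | 0 < MvPolynomial.eval (fun i => x i) p}
  | union {s t : Set (E n)} : IsSemialgebraic n s → IsSemialgebraic n t →
      IsSemialgebraic n (s ∪ t)
  | inter {s t : Set (E n)} : IsSemialgebraic n s → IsSemialgebraic n t →
      IsSemialgebraic n (s ∩ t)
  | compl {s : Set (E n)} : IsSemialgebraic n s → IsSemialgebraic n sᶜ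

/-- A map is semialgebraic on `s` if its graph over `s` is semialgebraic. -/
def IsSemialgebraicOn {m n : ℕ} (f : E m → E n) (s : Set (E m)) : Prop :=
  IsSemialgebraic (m + n)
    {z : E (m + n) | WithLp.toLp 2 (fun i : Fin m => z (Fin.castAdd n i)) ∈ s ∧
      ∀ j : Fin n, f (WithLp.toLp 2 (fun i : Fin m => z (Fin.castAdd n i))) j = z (Fin.natAdd m j)}

/-- A real-valued function on ℝⁿ is semialgebraic if its graph is semialgebraic. -/
def IsSemialgebraicFun (n : ℕ) (p : E n → ℝ) : Prop :=
  IsSemialgebraic (n + 1)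
    {z : E (n + 1) | p (WithLp.toLp 2 (fun i : Fin n => z (Fin.castAdd 1 i))) = z (Fin.natAdd n 0)}

/-- `f` is bi-Lipschitz on `s` (with respect to the outer metrics). -/
def IsBiLipschitzOn {α β : Type*} [PseudoMetricSpace α] [PseudoMetricSpace β]
    (f : α → β) (s : Set α) : Prop :=
  ∃ C : ℝ, 1 ≤ C ∧ ∀ x ∈ s, ∀ y ∈ s,
    dist x y ≤ C * dist (f x) (f y) ∧ dist (f x) (f y) ≤ C * dist x y

/-- A bi-Lipschitz embedding: bi-Lipschitz onto its image, which is closed. -/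
def IsBiLipschitzEmbedding {m n : ℕ} (f : E m → E n) (s : Set (E m)) : Prop :=
  IsBiLipschitzOn f s ∧ IsClosed (f '' s)

/-- A triangular bi-Lipschitz map: `(x₁,…,xₙ) ↦ (x₁,…,x_{n-1}, xₙ + p(x₁,…,x_{n-1}))`
with `p` Lipschitz (i.e. `p` depends only on the first `n-1` coordinates). -/
def IsTriangular (n : ℕ) (F : E n → E n) : Prop :=
  ∃ p : E n → ℝ, (∃ K : NNReal, LipschitzWith K p) ∧
    (∀ x y : E n, (∀ i : Fin n, (i : ℕ) + 1 < n → x i = y i) → p x = p y) ∧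
    ∀ (x : E n) (i : Fin n), F x i = x i + (if (i : ℕ) + 1 = n then p x else 0)

/-- Tame bi-Lipschitz homeomorphisms of ℝⁿ: compositions of triangular maps and
linear maps of determinant one. -/
inductive IsTame (n : ℕ) : (E n → E n) → Prop
  | triangular {F : E n → E n} : IsTriangular n F → IsTame n F
  | linear (A : E n →ₗ[ℝ] E n) (h : LinearMap.det A = 1) : IsTame n (A : E n → E n)
  | comp {F G : E n → E n} : IsTame n F → IsTame n G → IsTame n (F ∘ G)

/-- Triangular maps whose shift function is moreover semialgebraic. -/
def IsTriangularSA (n : ℕ) (F : E n → E n) : Prop :=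
  IsTriangular n F ∧ ∃ p : E n → ℝ, IsSemialgebraicFun n p ∧ (∃ K : NNReal, LipschitzWith K p) ∧
    (∀ x y : E n, (∀ i : Fin n, (i : ℕ) + 1 < n → x i = y i) → p x = p y) ∧
    ∀ (x : E n) (i : Fin n), F x i = x i + (if (i : ℕ) + 1 = n then p x else 0)

/-- Tame semialgebraic bi-Lipschitz homeomorphisms: compositions of semialgebraic
triangular maps and linear maps of determinant one. -/
inductive IsTameSA (n : ℕ) : (E n → E n) → Prop
  | triangular {F : E n → E n} : IsTriangularSA n F → IsTameSA n F
  | linear (A : E n →ₗ[ℝ] E n) (h : LinearMap.det A = 1) : IsTameSA n (A : E n → E n)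
  | comp {F G : E n → E n} : IsTameSA n F → IsTameSA n G → IsTameSA n (F ∘ G)

/-- The projection of ℝⁿ onto the first `l` coordinates, viewed as ℝˡ × {0} ⊆ ℝⁿ. -/
def projE (n l : ℕ) : E n → E n :=
  fun x => WithLp.toLp 2 (fun i : Fin n => if (i : ℕ) < l then x i else 0 : Fin n → ℝ)

/-!
Pulling back the coordinate functions `x ↦ xᵢ` of `ℝᵐ` along `f` yields Lipschitz functions
`hᵢ` on `ℝⁿ` with `hᵢ ∘ f = xᵢ` on `X`; together they form a Lipschitz left inverse of `f` on `X`,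
which makes `f` anti-Lipschitz on `X`. An anti-Lipschitz, uniformly continuous map on the
complete space `X` has closed range.
-/

open Set

lemma LipschitzWith.pi_mk {α ι : Type*} [Fintype ι] [PseudoEMetricSpace α] {β : ι → Type*}
    [∀ i, PseudoEMetricSpace (β i)] {K : NNReal} {h : ∀ i, α → β i}
    (hh : ∀ i, LipschitzWith K (h i)) : LipschitzWith K (fun a i => h i a) :=
  fun a b => edist_pi_le_iff.2 fun i => hh i a b

lemma LipschitzWith.antilipschitzWith_domRestrict_of_leftInvOn {α β : Type*}
    [PseudoEMetricSpace α] [PseudoEMetricSpace β] {K : NNReal} {f : α → β} {g : β → α}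
    {s : Set α} (hg : LipschitzWith K g) (hgf : LeftInvOn g f s) :
    AntilipschitzWith K (s.domRestrict f) := fun x y => by
  simpa only [domRestrict_apply, Subtype.edist_eq, hgf x.2, hgf y.2] using hg (f x) (f y)

lemma LipschitzOnWith.isBiLipschitzOn {α β : Type*} [PseudoMetricSpace α] [PseudoMetricSpace β]
    {K K' : NNReal} {f : α → β} {s : Set α} (hf : LipschitzOnWith K f s)
    (hf' : AntilipschitzWith K' (s.domRestrict f)) : IsBiLipschitzOn f s := by
  refine ⟨1 + K + K', by linarith [K.coe_nonneg, K'.coe_nonneg], fun x hx y hy => ⟨?_, ?_⟩⟩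
  · calc dist x y ≤ K' * dist (f x) (f y) := hf'.le_mul_dist ⟨x, hx⟩ ⟨y, hy⟩
      _ ≤ (1 + K + K') * dist (f x) (f y) := by gcongr; linarith [K.coe_nonneg]
  · calc dist (f x) (f y) ≤ K * dist x y := hf.dist_le_mul x hx y hy
      _ ≤ (1 + K + K') * dist x y := by gcongr; linarith [K'.coe_nonneg]

lemma IsClosed.isClosed_image_of_antilipschitzWith {α β : Type*} [PseudoEMetricSpace α]
    [CompleteSpace α] [EMetricSpace β] {K K' : NNReal} {f : α → β} {s : Set α}
    (hs : IsClosed s) (hf : LipschitzOnWith K f s) (hf' : AntilipschitzWith K' (s.domRestrict f)) :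
    IsClosed (f '' s) := by
  have := hs.completeSpace_coe
  rw [← range_domRestrict]
  exact hf'.isClosed_range hf.to_restrict.uniformContinuous

lemma exists_lipschitzWith_leftInvOn_of_pullback_surjective {m n : ℕ} {X : Set (E m)}
    {f : E m → E n}
    (hsurj : ∀ g : E m → ℝ, (∃ Kg : NNReal, LipschitzOnWith Kg g X) →
      ∃ h : E n → ℝ, (∃ Kh : NNReal, LipschitzWith Kh h) ∧ ∀ x ∈ X, h (f x) = g x) :
    ∃ (K : NNReal) (g : E n → E m), LipschitzWith K g ∧ LeftInvOn g f X := by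
  have coord (i : Fin m) : ∃ h : E n → ℝ, (∃ Kh : NNReal, LipschitzWith Kh h) ∧
      ∀ x ∈ X, h (f x) = x i :=
    hsurj (fun x => x i)
      ⟨1 * 1, ((LipschitzWith.eval i).comp (PiLp.lipschitzWith_ofLp 2 _)).lipschitzOnWith⟩
  choose h hLip hh using coord
  choose K hK using hLip
  refine ⟨_, fun y => WithLp.toLp 2 (fun i => h i y),
    (PiLp.lipschitzWith_toLp 2 _).comp <|
      LipschitzWith.pi_mk fun i => (hK i).weaken (Finset.le_sup (Finset.mem_univ i)),
    fun x hx => ?_⟩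
  ext i
  exact hh i x hx

/-- If the pullback `V(f) : V(ℝⁿ) → V(X)` on Lipschitz functions is surjective,
then `f` is a bi-Lipschitz embedding. -/
theorem stmt_0 (m n : ℕ) (X : Set (E m)) (hX : IsClosed X)
    (f : E m → E n) (hf : ∃ K : NNReal, LipschitzOnWith K f X)
    (hsurj : ∀ g : E m → ℝ, (∃ Kg : NNReal, LipschitzOnWith Kg g X) →
      ∃ h : E n → ℝ, (∃ Kh : NNReal, LipschitzWith Kh h) ∧ ∀ x ∈ X, h (f x) = g x) :
    IsBiLipschitzEmbedding f X := by
  obtain ⟨Kf, hKf⟩ := hf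
  obtain ⟨K, g, hg, hgf⟩ := exists_lipschitzWith_leftInvOn_of_pullback_surjective hsurj
  have hanti := hg.antilipschitzWith_domRestrict_of_leftInvOn hgf
  exact ⟨hKf.isBiLipschitzOn hanti, hX.isClosed_image_of_antilipschitzWith hKf hanti⟩
end
end

section
/- Let X be a closed subset of ℝ^n such that the projection π : X → ℝ^l × {0}, (x_1,…,x_n) ↦ (x_1,…,x_l,0,…,0), is a bi-Lipschitz embedding. Then there exists a bi-Lipschitz homeomorphism Π : ℝ^n → ℝ^n such that Π restricted to X equals π. Moreover Π can be taken to be a composition of maps of the form (x_1,…,x_n) ↦ (x_1,…,x_{n-1}, x_n + p(x_1,…,x_{n-1})) with p Lipschitz, and volume-preserving linear maps. -/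
open Metric Set Filter

noncomputable section

/-!
Each coordinate `x ↦ x j` is a Lipschitz function of `π x` on `X` (because `π` is bi-Lipschitz on
`X`), so by McShane extension there are Lipschitz `ψ j : ℝⁿ → ℝ` with `ψ j (π x) = x j` on `X`.
For `j ≥ l` the shear `x ↦ x - ψ j (π x) e_j` only moves the `j`-th coordinate and leaves `π`
unchanged, so the composite of these shears agrees with `π` on `X`. A shear along `e_j` is the
conjugate of a triangular map by a quarter turn of the `(j, n-1)`-plane, which has determinant one
as a product of three transvections; and every tame map is bijective and bi-Lipschitz.
-/

section Shear

variable {V : Type*} [NormedAddCommGroup V] [NormedSpace ℝ V] {v : V} {f : V → ℝ}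

def shear (v : V) (f : V → ℝ) (x : V) : V := x + f x • v

theorem shear_neg_leftInverse (hf : ∀ x (t : ℝ), f (x + t • v) = f x) :
    Function.LeftInverse (shear v (-f)) (shear v f) := fun x => by
  simp [shear, hf]

theorem bijective_shear (hf : ∀ x (t : ℝ), f (x + t • v) = f x) :
    Function.Bijective (shear v f) := by
  have hf' : ∀ x (t : ℝ), (-f) (x + t • v) = (-f) x := by simp [hf]
  have hright := shear_neg_leftInverse hf'
  rw [neg_neg] at hright
  exact ⟨(shear_neg_leftInverse hf).injective, hright.surjective⟩

theorem lipschitzWith_shear {K : NNReal} (hf : LipschitzWith K f) :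
    LipschitzWith (1 + K * ‖v‖₊) (shear v f) := by
  refine LipschitzWith.id.add (LipschitzWith.of_dist_le_mul fun x y => ?_)
  rw [dist_eq_norm, ← sub_smul, norm_smul, ← dist_eq_norm, NNReal.coe_mul, coe_nnnorm,
    mul_right_comm]
  exact mul_le_mul_of_nonneg_right (hf.dist_le_mul x y) (norm_nonneg v)

theorem antilipschitzWith_shear {K : NNReal} (hf : LipschitzWith K f)
    (hfv : ∀ x (t : ℝ), f (x + t • v) = f x) :
    AntilipschitzWith (1 + K * ‖v‖₊) (shear v f) := by
  simpa using (lipschitzWith_shear hf.neg).to_rightInverse (shear_neg_leftInverse hfv)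

theorem shear_conj {W : Type*} [NormedAddCommGroup W] [NormedSpace ℝ W] (A : V ≃ₗ[ℝ] W)
    (g : W → ℝ) : A.symm ∘ shear (A v) g ∘ A = shear v (g ∘ A) := by
  ext x
  simp [shear]

end Shear

theorem isBiLipschitzOn_of_lipschitzWith_of_antilipschitzWith {α β : Type*}
    [PseudoMetricSpace α] [PseudoMetricSpace β] {f : α → β} {K K' : NNReal}
    (hf : LipschitzWith K f) (hf' : AntilipschitzWith K' f) (s : Set α) : IsBiLipschitzOn f s := by
  refine ⟨max 1 (max K K'), le_max_left _ _, fun x _ y _ => ⟨?_, ?_⟩⟩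
  · exact (hf'.le_mul_dist x y).trans (by gcongr; simp)
  · exact (hf.dist_le_mul x y).trans (by gcongr; simp)

theorem LinearMap.exists_lipschitzWith_antilipschitzWith {V : Type*} [NormedAddCommGroup V]
    [NormedSpace ℝ V] [FiniteDimensional ℝ V] (A : V →ₗ[ℝ] V) (hA : LinearMap.det A ≠ 0) :
    ∃ K K' : NNReal, LipschitzWith K A ∧ AntilipschitzWith K' A := by
  let e := (A.equivOfDetNeZero hA).toContinuousLinearEquiv
  exact ⟨_, _, e.lipschitz, e.antilipschitz⟩

section Tame

variable {n : ℕ}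

/-- `e_{n-1}`, written without `Fin` arithmetic so that it also makes sense (as `0`) for `n = 0`. -/
def lastVec (n : ℕ) : E n := WithLp.toLp 2 fun i => if (i : ℕ) + 1 = n then 1 else 0

theorem shear_lastVec_apply (p : E n → ℝ) (x : E n) (i : Fin n) :
    shear (lastVec n) p x i = x i + if (i : ℕ) + 1 = n then p x else 0 := by
  simp [shear, lastVec]

theorem lastVec_eq_single {m : Fin n} (hm : (m : ℕ) + 1 = n) :
    lastVec n = EuclideanSpace.single m 1 := by
  ext i
  simp [lastVec, Fin.ext_iff, ← hm]

theorem IsTriangular.exists_eq_shear {F : E n → E n} (hF : IsTriangular n F) :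
    ∃ p : E n → ℝ, (∃ K, LipschitzWith K p) ∧ (∀ x (t : ℝ), p (x + t • lastVec n) = p x) ∧
      F = shear (lastVec n) p := by
  obtain ⟨p, hp, hdep, hFp⟩ := hF
  refine ⟨p, hp, fun x t => hdep _ _ fun i hi => ?_, funext fun x => ?_⟩
  · simp [lastVec, hi.ne]
  · ext i
    rw [hFp, shear_lastVec_apply]

theorem isTriangular_shear_lastVec {p : E n → ℝ} {K : NNReal} (hp : LipschitzWith K p)
    (hdep : ∀ x y : E n, (∀ i : Fin n, (i : ℕ) + 1 < n → x i = y i) → p x = p y) :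
    IsTriangular n (shear (lastVec n) p) :=
  ⟨p, ⟨K, hp⟩, hdep, shear_lastVec_apply p⟩

theorem IsTame.bijective {F : E n → E n} (hF : IsTame n F) : Function.Bijective F := by
  induction hF with
  | triangular h =>
    obtain ⟨p, -, hp, rfl⟩ := h.exists_eq_shear
    exact bijective_shear hp
  | linear A hA => exact (A.equivOfDetNeZero (by simp [hA])).bijective
  | comp _ _ hF hG => exact hF.comp hG

theorem IsTame.exists_lipschitzWith_antilipschitzWith {F : E n → E n} (hF : IsTame n F) :
    ∃ K K' : NNReal, LipschitzWith K F ∧ AntilipschitzWith K' F := by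
  induction hF with
  | triangular h =>
    obtain ⟨p, ⟨K, hK⟩, hp, rfl⟩ := h.exists_eq_shear
    exact ⟨_, _, lipschitzWith_shear hK, antilipschitzWith_shear hK hp⟩
  | linear A hA => exact A.exists_lipschitzWith_antilipschitzWith (by simp [hA])
  | comp _ _ hF hG =>
    obtain ⟨K₁, K₁', hF, hF'⟩ := hF
    obtain ⟨K₂, K₂', hG, hG'⟩ := hG
    exact ⟨_, _, hF.comp hG, hF'.comp hG'⟩

theorem IsTame.isBiLipschitzOn {F : E n → E n} (hF : IsTame n F) (s : Set (E n)) :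
    IsBiLipschitzOn F s :=
  let ⟨_, _, hK, hK'⟩ := hF.exists_lipschitzWith_antilipschitzWith
  isBiLipschitzOn_of_lipschitzWith_of_antilipschitzWith hK hK' s

theorem IsTame.linearEquiv_conj {F : E n → E n} (hF : IsTame n F) (A : E n ≃ₗ[ℝ] E n)
    (hA : LinearMap.det (A : E n →ₗ[ℝ] E n) = 1) : IsTame n (A.symm ∘ F ∘ A) :=
  .comp (.linear (A.symm : E n →ₗ[ℝ] E n) (by rw [LinearEquiv.det_coe_symm, hA, inv_one]))
    (.comp hF (.linear (A : E n →ₗ[ℝ] E n) hA))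

end Tame

section Transvection

variable {n : ℕ}

def transvectionLin (a b : Fin n) (c : ℝ) : E n →ₗ[ℝ] E n :=
  Matrix.toLpLin 2 2 (Matrix.transvection a b c)

theorem transvectionLin_apply (a b : Fin n) (c : ℝ) (x : E n) :
    transvectionLin a b c x = x + (c * x b) • EuclideanSpace.single a 1 := by
  ext i
  simp [transvectionLin, Matrix.transvection, Matrix.single_mulVec, Function.update_apply]

theorem det_transvectionLin {a b : Fin n} (h : a ≠ b) (c : ℝ) :
    LinearMap.det (transvectionLin a b c) = 1 := by
  rw [transvectionLin, Matrix.toLpLin_eq_toLin, LinearMap.det_toLin]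
  exact Matrix.det_transvection_of_ne a b h c

/-- The rotation `x_a ↦ -x_b, x_b ↦ x_a` of the `(a, b)`-plane. -/
def quarterTurn (a b : Fin n) : E n →ₗ[ℝ] E n :=
  transvectionLin a b (-1) ∘ₗ transvectionLin b a 1 ∘ₗ transvectionLin a b (-1)

theorem det_quarterTurn {a b : Fin n} (h : a ≠ b) : LinearMap.det (quarterTurn a b) = 1 := by
  simp [quarterTurn, LinearMap.det_comp, det_transvectionLin h, det_transvectionLin h.symm]

theorem quarterTurn_single {a b : Fin n} (h : a ≠ b) :
    quarterTurn a b (EuclideanSpace.single a 1) = EuclideanSpace.single b 1 := by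
  simp [quarterTurn, transvectionLin_apply, h.symm]

end Transvection

section Projection

variable {n l : ℕ}

theorem lipschitzWith_projE : LipschitzWith 1 (projE n l) := by
  refine LipschitzWith.of_dist_le_mul fun x y => ?_
  rw [NNReal.coe_one, one_mul, EuclideanSpace.dist_eq, EuclideanSpace.dist_eq]
  gcongr with i
  simp only [projE, PiLp.toLp_apply]
  split_ifs
  · rfl
  · simp

theorem projE_congr {x y : E n} (h : ∀ i : Fin n, (i : ℕ) < l → x i = y i) :
    projE n l x = projE n l y := by
  ext i
  simp only [projE, PiLp.toLp_apply]
  split_ifs with hi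
  exacts [h i hi, rfl]

theorem projE_add_smul_single {m : Fin n} (hm : l ≤ m) (x : E n) (t : ℝ) :
    projE n l (x + t • EuclideanSpace.single m 1) = projE n l x :=
  projE_congr fun i hi => by simp [(Fin.ne_of_val_ne (by omega) : i ≠ m)]

theorem projE_quarterTurn {a b : Fin n} (ha : l ≤ a) (hb : l ≤ b) (x : E n) :
    projE n l (quarterTurn a b x) = projE n l x := by
  simp only [quarterTurn, LinearMap.comp_apply, transvectionLin_apply, projE_add_smul_single ha,
    projE_add_smul_single hb]

theorem exists_det_eq_one_apply_single_eq_lastVec {m : Fin n} (hm : l ≤ m) :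
    ∃ A : E n →ₗ[ℝ] E n, LinearMap.det A = 1 ∧ A (EuclideanSpace.single m 1) = lastVec n ∧
      ∀ x, projE n l (A x) = projE n l x := by
  let last : Fin n := ⟨n - 1, by omega⟩
  rw [lastVec_eq_single (m := last) (by simp [last]; omega)]
  by_cases h : m = last
  · exact ⟨LinearMap.id, LinearMap.det_id, by rw [h]; rfl, fun _ => rfl⟩
  · exact ⟨quarterTurn m last, det_quarterTurn h, quarterTurn_single h,
      projE_quarterTurn hm (by simp [last]; omega)⟩

theorem isTame_shear_single {m : Fin n} (hm : l ≤ m) {ψ : E n → ℝ} {K : NNReal}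
    (hψ : LipschitzWith K ψ) : IsTame n (shear (EuclideanSpace.single m 1) (ψ ∘ projE n l)) := by
  obtain ⟨A, hdet, hAm, hAproj⟩ := exists_det_eq_one_apply_single_eq_lastVec hm
  let e := A.equivOfDetNeZero (by simp [hdet])
  have htri : IsTame n (shear (lastVec n) (ψ ∘ projE n l)) := by
    refine .triangular (isTriangular_shear_lastVec (hψ.comp lipschitzWith_projE) ?_)
    exact fun x y hxy => congrArg ψ (projE_congr fun i hi => hxy i (by omega))
  have he : e (EuclideanSpace.single m 1) = lastVec n := hAm
  have hψe : (ψ ∘ projE n l) ∘ e = ψ ∘ projE n l := funext fun x => congrArg ψ (hAproj x)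
  have hconj := htri.linearEquiv_conj e (by simpa [e] using hdet)
  rwa [← he, shear_conj, hψe] at hconj

theorem isTame_add_sum_smul_single (s : Finset (Fin n)) (hs : ∀ m ∈ s, l ≤ (m : ℕ))
    (ψ : Fin n → E n → ℝ) (hψ : ∀ m ∈ s, ∃ K, LipschitzWith K (ψ m)) :
    IsTame n fun x => x + ∑ m ∈ s, ψ m (projE n l x) • EuclideanSpace.single m 1 := by
  classical
  induction s using Finset.induction_on with
  | empty =>
    simp only [Finset.sum_empty, add_zero]
    exact IsTame.linear LinearMap.id LinearMap.det_id
  | insert a s ha ih =>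
    obtain ⟨K, hK⟩ := hψ a (s.mem_insert_self a)
    have hproj : ∀ x, projE n l (x + ∑ m ∈ s, ψ m (projE n l x) • EuclideanSpace.single m 1) =
        projE n l x := fun x => projE_congr fun i hi => by
      have hne : ∀ m ∈ s, i ≠ m := fun m hm h =>
        (h ▸ hs m (Finset.mem_insert_of_mem hm)).not_gt hi
      simp +contextual [Finset.sum_apply, hne]
    convert (isTame_shear_single (hs a (s.mem_insert_self a)) hK).comp
      (ih (fun m hm => hs m (Finset.mem_insert_of_mem hm))
        (fun m hm => hψ m (Finset.mem_insert_of_mem hm))) using 1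
    ext1 x
    simp only [Finset.sum_insert ha, Function.comp_apply, shear, hproj]
    abel

end Projection

theorem exists_lipschitzWith_comp_eq {α β : Type*} [PseudoMetricSpace α] [PseudoMetricSpace β]
    {f : α → β} {g : α → ℝ} {s : Set α} {K : NNReal}
    (h : ∀ x ∈ s, ∀ y ∈ s, dist (g x) (g y) ≤ K * dist (f x) (f y)) :
    ∃ ψ : β → ℝ, LipschitzWith K ψ ∧ ∀ x ∈ s, ψ (f x) = g x := by
  classical
  let φ : β → ℝ := fun y => if hy : y ∈ f '' s then g hy.choose else 0
  have hφ : ∀ x ∈ s, φ (f x) = g x := fun x hx => by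
    have hy := mem_image_of_mem f hx
    obtain ⟨hys, hyx⟩ := hy.choose_spec
    have := h _ hys x hx
    rw [hyx, dist_self, mul_zero] at this
    simp only [φ, dif_pos hy]
    exact dist_le_zero.mp this
  have hlip : LipschitzOnWith K φ (f '' s) := by
    refine LipschitzOnWith.of_dist_le_mul ?_
    rintro - ⟨x, hx, rfl⟩ - ⟨y, hy, rfl⟩
    rw [hφ x hx, hφ y hy]
    exact h x hx y hy
  obtain ⟨ψ, hψ, hφψ⟩ := hlip.extend_real
  exact ⟨ψ, hψ, fun x hx => (hφψ (mem_image_of_mem f hx)).symm.trans (hφ x hx)⟩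

theorem stmt_2_general (n l : ℕ) (X : Set (E n))
    (hemb : IsBiLipschitzEmbedding (projE n l) X) :
    ∃ P : E n → E n, IsTame n P ∧ Function.Bijective P ∧
      IsBiLipschitzOn P (univ : Set (E n)) ∧ Set.EqOn P (projE n l) X := by
  obtain ⟨⟨C, hC1, hC⟩, -⟩ := hemb
  have hcoord (j : Fin n) : ∃ ψ : E n → ℝ, LipschitzWith C.toNNReal ψ ∧
      ∀ x ∈ X, ψ (projE n l x) = x j :=
    exists_lipschitzWith_comp_eq fun x hx y hy => by
      rw [Real.coe_toNNReal C (by linarith)]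
      exact (PiLp.dist_apply_le x y j).trans (hC x hx y hy).1
  choose ψ hψ hψX using hcoord
  have hP := isTame_add_sum_smul_single (l := l) {m : Fin n | l ≤ m} (by simp) (fun m => -ψ m)
    (fun m _ => ⟨_, (hψ m).neg⟩)
  refine ⟨_, hP, hP.bijective, hP.isBiLipschitzOn univ, fun x hx => ?_⟩
  ext i
  simp only [PiLp.add_apply, Pi.neg_apply, hψX _ x hx]
  by_cases hi : l ≤ (i : ℕ) <;> simp [projE, Pi.single_apply, hi]

/-- If the coordinate projection onto ℝˡ × {0} is a bi-Lipschitz embedding of the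
closed set `X`, then it extends to a tame bi-Lipschitz homeomorphism of ℝⁿ. -/
theorem stmt_2 (n l : ℕ) (X : Set (E n)) (hX : IsClosed X)
    (hemb : IsBiLipschitzEmbedding (projE n l) X) :
    ∃ P : E n → E n, IsTame n P ∧ Function.Bijective P ∧
      IsBiLipschitzOn P (univ : Set (E n)) ∧ Set.EqOn P (projE n l) X :=
  stmt_2_general n l X hemb
end
end

section
/- Let X ⊆ ℝ^n and Y ⊆ ℝ^n be closed sets contained in linear subspaces L^s and H^{n−s} respectively, of dimensions s and n−s. Then every bi-Lipschitz homeomorphism f : X → Y extends to a tame bi-Lipschitz homeomorphism F : ℝ^n → ℝ^n with F|_X = f. -/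
open Metric Set Filter

noncomputable section

/-!
Linear maps of determinant one move `L` onto a coordinate subspace `ℝᵗᶜ` and `H` onto the
complementary one `ℝᵗ`, turning `f` into a bi-Lipschitz map `g` from a subset of `ℝᵗᶜ` into `ℝᵗ`.
Extend `g` and its inverse to Lipschitz maps `φ : ℝᵗᶜ → ℝᵗ` and `ψ : ℝᵗ → ℝᵗᶜ`. The shears
`(u, v) ↦ (u, v + φ u)` and `(u, v) ↦ (u - ψ v, v)` are bi-Lipschitz, and on the image of `X`
their composite is `(u, 0) ↦ (u, g u) ↦ (0, g u)`. A shear is a composite of shears in a single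
coordinate, and these are conjugate by transvections to triangular maps.
-/

open Module (finrank)
open EuclideanSpace (single proj)

section

variable {α β γ : Type*} [PseudoMetricSpace α] [PseudoMetricSpace β] [PseudoMetricSpace γ]
  {f : α → β} {s : Set α}

lemma IsBiLipschitzOn.mono {t : Set α} (hf : IsBiLipschitzOn f s) (hts : t ⊆ s) :
    IsBiLipschitzOn f t :=
  let ⟨C, hC1, hC⟩ := hf
  ⟨C, hC1, fun x hx y hy => hC x (hts hx) y (hts hy)⟩

lemma IsBiLipschitzOn.comp {g : β → γ} {t : Set β} (hg : IsBiLipschitzOn g t)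
    (hf : IsBiLipschitzOn f s) (hst : MapsTo f s t) : IsBiLipschitzOn (g ∘ f) s := by
  obtain ⟨C, hC1, hC⟩ := hf
  obtain ⟨D, hD1, hD⟩ := hg
  refine ⟨D * C, one_le_mul_of_one_le_of_one_le hD1 hC1, fun x hx y hy => ⟨?_, ?_⟩⟩
  · calc dist x y ≤ C * dist (f x) (f y) := (hC x hx y hy).1
      _ ≤ C * (D * dist (g (f x)) (g (f y))) :=
        mul_le_mul_of_nonneg_left (hD _ (hst hx) _ (hst hy)).1 (by linarith)
      _ = D * C * dist ((g ∘ f) x) ((g ∘ f) y) := by simp only [Function.comp_apply]; ring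
  · calc dist ((g ∘ f) x) ((g ∘ f) y) ≤ D * dist (f x) (f y) := (hD _ (hst hx) _ (hst hy)).2
      _ ≤ D * (C * dist x y) := mul_le_mul_of_nonneg_left (hC x hx y hy).2 (by linarith)
      _ = D * C * dist x y := by ring

lemma IsBiLipschitzOn.exists_lipschitzOnWith (hf : IsBiLipschitzOn f s) :
    ∃ K, LipschitzOnWith K f s := by
  obtain ⟨C, hC1, hC⟩ := hf
  refine ⟨C.toNNReal, LipschitzOnWith.of_dist_le_mul fun x hx y hy => ?_⟩
  rw [Real.coe_toNNReal C (by linarith)]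
  exact (hC x hx y hy).2

lemma isBiLipschitzOn_univ_of_leftInverse {g : β → α} {K K' : NNReal}
    (hgf : Function.LeftInverse g f) (hf : LipschitzWith K f) (hg : LipschitzWith K' g) :
    IsBiLipschitzOn f univ := by
  refine ⟨1 + K + K', by linarith [K.coe_nonneg, K'.coe_nonneg], fun x _ y _ => ⟨?_, ?_⟩⟩
  · calc dist x y = dist (g (f x)) (g (f y)) := by rw [hgf, hgf]
      _ ≤ K' * dist (f x) (f y) := hg.dist_le_mul _ _
      _ ≤ (1 + K + K') * dist (f x) (f y) := by gcongr; linarith [K.coe_nonneg]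
  · calc dist (f x) (f y) ≤ K * dist x y := hf.dist_le_mul _ _
      _ ≤ (1 + K + K') * dist x y := by gcongr; linarith [K'.coe_nonneg]

lemma LinearEquiv.isBiLipschitzOn_univ {V W : Type*} [NormedAddCommGroup V] [NormedSpace ℝ V]
    [FiniteDimensional ℝ V] [NormedAddCommGroup W] [NormedSpace ℝ W] [FiniteDimensional ℝ W]
    (σ : V ≃ₗ[ℝ] W) : IsBiLipschitzOn σ univ :=
  isBiLipschitzOn_univ_of_leftInverse σ.left_inv σ.toContinuousLinearEquiv.lipschitz
    σ.toContinuousLinearEquiv.symm.lipschitz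

end

section

variable {α β : Type*} [MetricSpace α] [PseudoMetricSpace β] {f : α → β} {s : Set α}

lemma IsBiLipschitzOn.injOn (hf : IsBiLipschitzOn f s) : InjOn f s := by
  obtain ⟨C, -, hC⟩ := hf
  intro x hx y hy hxy
  exact dist_le_zero.1 (by simpa [hxy] using (hC x hx y hy).1)

lemma IsBiLipschitzOn.exists_lipschitzOnWith_leftInvOn [Nonempty α] (hf : IsBiLipschitzOn f s) :
    ∃ g : β → α, LeftInvOn g f s ∧ ∃ K, LipschitzOnWith K g (f '' s) := by
  have hinv := hf.injOn.leftInvOn_invFunOn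
  obtain ⟨C, hC1, hC⟩ := hf
  refine ⟨Function.invFunOn f s, hinv, C.toNNReal, LipschitzOnWith.of_dist_le_mul ?_⟩
  rintro _ ⟨x, hx, rfl⟩ _ ⟨y, hy, rfl⟩
  rw [Real.coe_toNNReal C (by linarith), hinv hx, hinv hy]
  exact (hC x hx y hy).1

end

lemma Submodule.exists_linearEquiv_mapsTo {K V : Type*} [Field K] [AddCommGroup V] [Module K V]
    [FiniteDimensional K V] (W U : Submodule K V) (h : finrank K W = finrank K U) :
    ∃ σ : V ≃ₗ[K] V, MapsTo σ W U := by
  obtain ⟨W', hW'⟩ := W.exists_isCompl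
  obtain ⟨U', hU'⟩ := U.exists_isCompl
  have h' : finrank K W' = finrank K U' := by
    have := finrank_add_eq_of_isCompl hW'
    have := finrank_add_eq_of_isCompl hU'
    omega
  refine ⟨(prodEquivOfIsCompl W W' hW').symm ≪≫ₗ
    (LinearEquiv.ofFinrankEq W U h).prodCongr (LinearEquiv.ofFinrankEq W' U' h') ≪≫ₗ
    prodEquivOfIsCompl U U' hU', fun x hx => ?_⟩
  have : (prodEquivOfIsCompl W W' hW').symm x = (⟨x, hx⟩, 0) :=
    prodEquivOfIsCompl_symm_apply_left W W' hW' ⟨x, hx⟩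
  simp [this]

section Euclidean

variable {n : ℕ}

def coordProj (t : Finset (Fin n)) : E n →L[ℝ] E n :=
  LinearMap.toContinuousLinearMap
    { toFun := fun x => WithLp.toLp 2 fun i => if i ∈ t then x i else 0
      map_add' := fun x y => by ext i; by_cases hi : i ∈ t <;> simp [hi]
      map_smul' := fun c x => by ext i; by_cases hi : i ∈ t <;> simp [hi] }

lemma coordProj_apply (t : Finset (Fin n)) (x : E n) (i : Fin n) :
    coordProj t x i = if i ∈ t then x i else 0 :=
  rfl

lemma coordProj_eq_self {t : Finset (Fin n)} {x : E n} (hx : ∀ i ∉ t, x i = 0) :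
    coordProj t x = x := by
  ext i
  by_cases hi : i ∈ t <;> simp [coordProj_apply, hi, hx]

def coordSubspace (t : Finset (Fin n)) : Submodule ℝ (E n) :=
  Submodule.span ℝ (Set.range fun i : t => single (i : Fin n) (1 : ℝ))

lemma finrank_coordSubspace (t : Finset (Fin n)) : finrank ℝ (coordSubspace t) = t.card := by
  rw [coordSubspace, finrank_span_eq_card, Fintype.card_coe]
  have h := (EuclideanSpace.basisFun (Fin n) ℝ).toBasis.linearIndependent.comp _
    (Subtype.val_injective (p := (· ∈ t)))
  simpa only [OrthonormalBasis.coe_toBasis, Function.comp_def, EuclideanSpace.basisFun_apply]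
    using h

lemma apply_eq_zero_of_mem_coordSubspace {t : Finset (Fin n)} {x : E n} (hx : x ∈ coordSubspace t)
    {i : Fin n} (hi : i ∉ t) : x i = 0 := by
  have : coordSubspace t ≤ LinearMap.ker (proj i : E n →L[ℝ] ℝ).toLinearMap :=
    Submodule.span_le.2 <| range_subset_iff.2 fun j => by
      simp [ne_of_mem_of_not_mem j.2 hi]
  simpa using this hx

lemma exists_det_eq_one_mapsTo_coordSubspace (t : Finset (Fin n)) (W : Submodule ℝ (E n))
    (hW : finrank ℝ W = t.card) :
    ∃ σ : E n ≃ₗ[ℝ] E n, LinearMap.det (σ : E n →ₗ[ℝ] E n) = 1 ∧ MapsTo σ W (coordSubspace t) := by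
  obtain ⟨σ, hσ⟩ :=
    W.exists_linearEquiv_mapsTo (coordSubspace t) (by rw [hW, finrank_coordSubspace])
  rcases Nat.eq_zero_or_pos n with hn | hn
  · exact ⟨σ, LinearMap.det_eq_one_of_finrank_eq_zero (by simp [hn]) _, hσ⟩
  -- rescale the first coordinate by `(det σ)⁻¹`, which preserves every coordinate subspace
  set k : Fin n := ⟨0, hn⟩
  set c := (LinearMap.det (σ : E n →ₗ[ℝ] E n))⁻¹
  have hc : IsUnit (1 + (proj k : E n →L[ℝ] ℝ).toLinearMap ((c - 1) • single k 1)) := by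
    simpa [c] using (LinearEquiv.isUnit_det' σ).ne_zero
  refine ⟨σ ≪≫ₗ LinearEquiv.dilatransvection hc, ?_, fun x hx => ?_⟩
  · rw [LinearEquiv.coe_trans, LinearMap.det_comp, LinearEquiv.dilatransvection.coe_toLinearMap,
      LinearMap.transvection.det]
    simp [c, (LinearEquiv.isUnit_det' σ).ne_zero]
  · have hσx := hσ hx
    simp only [LinearEquiv.trans_apply, LinearEquiv.dilatransvection.apply]
    by_cases hk : k ∈ t
    · exact add_mem hσx <| Submodule.smul_mem _ _ <| Submodule.smul_mem _ _ <|
        Submodule.subset_span ⟨⟨k, hk⟩, rfl⟩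
    · simpa [apply_eq_zero_of_mem_coordSubspace hσx hk] using hσx

lemma exists_det_eq_one_apply_single (j l : Fin n) :
    ∃ σ : E n ≃ₗ[ℝ] E n, LinearMap.det (σ : E n →ₗ[ℝ] E n) = 1 ∧ σ (single l 1) = single j 1 := by
  rcases eq_or_ne j l with rfl | hjl
  · exact ⟨LinearEquiv.refl ℝ _, LinearMap.det_id, rfl⟩
  -- `single l 1 ↦ single l 1 + single j 1 ↦ single j 1`
  have h₁ : (proj l : E n →L[ℝ] ℝ).toLinearMap (single j 1) = 0 := by simp [hjl]
  have h₂ : (-(proj j : E n →L[ℝ] ℝ).toLinearMap) (single l 1) = 0 := by simp [hjl]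
  refine ⟨(LinearEquiv.transvection h₁).trans (LinearEquiv.transvection h₂), ?_, ?_⟩
  · rw [LinearEquiv.coe_trans, LinearMap.det_comp]
    simp [h₁, h₂]
  · simp [LinearMap.transvection.apply, hjl]

lemma isTriangular_add_smul_single {l : Fin n} (hl : (l : ℕ) + 1 = n) {p : E n → ℝ} {K : NNReal}
    (hp : LipschitzWith K p) (hinv : ∀ x (a : ℝ), p (x + a • single l 1) = p x) :
    IsTriangular n (fun x => x + p x • single l 1) := by
  have hlast : ∀ i : Fin n, i = l ↔ (i : ℕ) + 1 = n := fun i => by rw [Fin.ext_iff]; omega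
  refine ⟨p, ⟨K, hp⟩, fun x y hxy => ?_, fun x i => ?_⟩
  · have : y = x + (y l - x l) • single l 1 := by
      ext i
      by_cases hi : i = l
      · subst hi; simp
      · simp [hi, hxy i (by have := (hlast i).not.1 hi; omega)]
    rw [this, hinv]
  · simp [PiLp.single_apply, hlast]

lemma isTame_add_smul_single (j : Fin n) {p : E n → ℝ} {K : NNReal} (hp : LipschitzWith K p)
    (hinv : ∀ x (a : ℝ), p (x + a • single j 1) = p x) :
    IsTame n (fun x => x + p x • single j 1) := by
  have hn : 0 < n := j.pos
  obtain ⟨σ, hσ, hσl⟩ := exists_det_eq_one_apply_single j ⟨n - 1, by omega⟩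
  have hσ' : LinearMap.det (σ.symm : E n →ₗ[ℝ] E n) = 1 := by
    rw [LinearEquiv.det_coe_symm, hσ, inv_one]
  have htri := isTriangular_add_smul_single (l := ⟨n - 1, by omega⟩) (by simp; omega)
    (p := p ∘ σ) (hp.comp σ.toContinuousLinearEquiv.lipschitz) (fun x a => by simp [hσl, hinv])
  convert (IsTame.linear _ hσ).comp ((IsTame.triangular htri).comp (IsTame.linear _ hσ')) using 1
  ext x : 1
  simp [hσl]

structure IsTameBiLipschitz (n : ℕ) (F : E n → E n) : Prop where
  isTame : IsTame n F
  lipschitz : ∃ K, LipschitzWith K F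
  exists_inverse : ∃ G : E n → E n, Function.LeftInverse G F ∧ Function.RightInverse G F ∧
    ∃ K, LipschitzWith K G

namespace IsTameBiLipschitz

variable {F G : E n → E n}

lemma comp (hF : IsTameBiLipschitz n F) (hG : IsTameBiLipschitz n G) :
    IsTameBiLipschitz n (F ∘ G) := by
  obtain ⟨K, hK⟩ := hF.lipschitz
  obtain ⟨K', hK'⟩ := hG.lipschitz
  obtain ⟨F', hF'l, hF'r, L, hL⟩ := hF.exists_inverse
  obtain ⟨G', hG'l, hG'r, L', hL'⟩ := hG.exists_inverse
  exact ⟨hF.isTame.comp hG.isTame, ⟨_, hK.comp hK'⟩,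
    G' ∘ F', hF'l.comp hG'l, hF'r.comp hG'r, ⟨_, hL'.comp hL⟩⟩

lemma of_linearEquiv (σ : E n ≃ₗ[ℝ] E n) (hσ : LinearMap.det (σ : E n →ₗ[ℝ] E n) = 1) :
    IsTameBiLipschitz n σ :=
  ⟨IsTame.linear _ hσ, ⟨_, σ.toContinuousLinearEquiv.lipschitz⟩,
    σ.symm, σ.left_inv, σ.right_inv, ⟨_, σ.toContinuousLinearEquiv.symm.lipschitz⟩⟩

lemma bijective (hF : IsTameBiLipschitz n F) : Function.Bijective F :=
  let ⟨_, hl, hr, _⟩ := hF.exists_inverse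
  ⟨hl.injective, hr.surjective⟩

lemma isBiLipschitzOn (hF : IsTameBiLipschitz n F) : IsBiLipschitzOn F univ :=
  let ⟨_, hK⟩ := hF.lipschitz
  let ⟨_, hl, _, _, hK'⟩ := hF.exists_inverse
  isBiLipschitzOn_univ_of_leftInverse hl hK hK'

end IsTameBiLipschitz

-- `x ↦ x + φ x` is the shear `(u, v) ↦ (u, v + φ u)`, with `v` the coordinates in `t`.
structure IsShearField (t : Finset (Fin n)) (φ : E n → E n) : Prop where
  apply_eq_zero : ∀ x, ∀ i ∉ t, φ x i = 0
  apply_congr : ∀ x y, (∀ i ∉ t, x i = y i) → φ x = φ y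
  lipschitz : ∃ K, LipschitzWith K φ

namespace IsShearField

variable {t : Finset (Fin n)} {φ : E n → E n}

lemma apply_add (hφ : IsShearField t φ) (x : E n) {v : E n} (hv : ∀ i ∉ t, v i = 0) :
    φ (x + v) = φ x :=
  hφ.apply_congr _ _ fun i hi => by simp [hv i hi]

lemma neg (hφ : IsShearField t φ) : IsShearField t (-φ) where
  apply_eq_zero x i hi := by simp [hφ.apply_eq_zero x i hi]
  apply_congr x y hxy := by simp [hφ.apply_congr x y hxy]
  lipschitz := let ⟨_, hK⟩ := hφ.lipschitz; ⟨_, hK.neg⟩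

lemma isTame (hφ : IsShearField t φ) : IsTame n (fun x => x + φ x) := by
  induction t using Finset.induction_on generalizing φ with
  | empty =>
    convert IsTame.linear (LinearMap.id : E n →ₗ[ℝ] E n) LinearMap.det_id using 1
    ext x i
    simp [hφ.apply_eq_zero x i (Finset.notMem_empty i)]
  | insert j t hj ih =>
    obtain ⟨K, hK⟩ := hφ.lipschitz
    -- split off the `j`-th coordinate of `φ`, which is sheared last
    set φ' : E n → E n := fun x => φ x - φ x j • single j 1
    have hφ' : IsShearField t φ' := by
      refine ⟨fun x i hi => ?_, fun x y hxy => ?_,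
        ⟨_, hK.sub (((proj j : E n →L[ℝ] ℝ).smulRight (single j (1 : ℝ))).lipschitz.comp hK)⟩⟩
      · by_cases hij : i = j
        · simp [φ', hij]
        · simp [φ', hij, hφ.apply_eq_zero x i (by simp [hij, hi])]
      · simp only [φ', hφ.apply_congr x y fun i hi => hxy i fun hit =>
          hi (Finset.mem_insert_of_mem hit)]
    have hS := isTame_add_smul_single j (p := fun x => φ x j)
      ((proj j : E n →L[ℝ] ℝ).lipschitz.comp hK) fun x a =>
        congrArg (· j) (hφ.apply_add x fun i hi => by
          simp only [Finset.mem_insert, not_or] at hi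
          simp [hi.1])
    convert hS.comp (ih hφ') using 1
    ext x : 1
    have : φ (x + φ' x) = φ x := hφ.apply_add x fun i hi =>
      hφ'.apply_eq_zero x i fun hit => hi (Finset.mem_insert_of_mem hit)
    simp only [Function.comp_apply, this, φ']
    abel

lemma isTameBiLipschitz (hφ : IsShearField t φ) : IsTameBiLipschitz n (fun x => x + φ x) := by
  obtain ⟨K, hK⟩ := hφ.lipschitz
  refine ⟨hφ.isTame, ⟨_, LipschitzWith.id.add hK⟩, fun x => x - φ x, fun x => ?_, fun x => ?_,
    ⟨_, LipschitzWith.id.sub hK⟩⟩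
  · simp [hφ.apply_add x (hφ.apply_eq_zero x)]
  · have : φ (x - φ x) = φ x := by
      simpa [← sub_eq_add_neg] using
        hφ.apply_add x (v := -φ x) fun i hi => by simp [hφ.apply_eq_zero x i hi]
    simp [this]

end IsShearField

lemma exists_isShearField_eqOn (t : Finset (Fin n)) {X : Set (E n)} {g : E n → E n} {K : NNReal}
    (hX : ∀ x ∈ X, ∀ i ∈ t, x i = 0) (hgX : ∀ x ∈ X, ∀ i ∉ t, g x i = 0)
    (hg : LipschitzOnWith K g X) : ∃ φ, IsShearField t φ ∧ EqOn φ g X := by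
  obtain ⟨g', hg', hgg'⟩ := hg.extend_finite_dimension
  refine ⟨coordProj t ∘ g' ∘ coordProj tᶜ, ⟨fun x i hi => by simp [coordProj_apply, hi],
    fun x y hxy => ?_, ⟨_, (coordProj t).lipschitz.comp (hg'.comp (coordProj tᶜ).lipschitz)⟩⟩,
    fun x hx => ?_⟩
  · have : coordProj tᶜ x = coordProj tᶜ y := by
      ext i
      by_cases hi : i ∈ t <;> simp [coordProj_apply, hi, hxy]
    simp [this]
  · have : coordProj tᶜ x = x := coordProj_eq_self fun i hi => hX x hx i (by simpa using hi)
    simp [this, ← hgg' hx, coordProj_eq_self (hgX x hx)]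

theorem exists_isTameBiLipschitz_eqOn (t : Finset (Fin n)) {X : Set (E n)} {g : E n → E n}
    (hX : ∀ x ∈ X, ∀ i ∈ t, x i = 0) (hgX : ∀ x ∈ X, ∀ i ∉ t, g x i = 0)
    (hg : IsBiLipschitzOn g X) : ∃ F, IsTameBiLipschitz n F ∧ EqOn F g X := by
  obtain ⟨K, hK⟩ := hg.exists_lipschitzOnWith
  obtain ⟨g', hg'g, K', hK'⟩ := hg.exists_lipschitzOnWith_leftInvOn
  obtain ⟨φ, hφ, hφg⟩ := exists_isShearField_eqOn t hX hgX hK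
  obtain ⟨ψ, hψ, hψg'⟩ := exists_isShearField_eqOn tᶜ (X := g '' X) (g := g')
    (by rintro _ ⟨x, hx, rfl⟩ i hi; exact hgX x hx i (Finset.mem_compl.1 hi))
    (by rintro _ ⟨x, hx, rfl⟩ i hi; rw [hg'g hx]; exact hX x hx i (by simpa using hi)) hK'
  refine ⟨(fun y => y + (-ψ) y) ∘ (fun x => x + φ x),
    hψ.neg.isTameBiLipschitz.comp hφ.isTameBiLipschitz, fun x hx => ?_⟩
  have : ψ (x + g x) = x := by
    rw [hψ.apply_congr (x + g x) (g x) fun i hi => by simp [hX x hx i (by simpa using hi)],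
      hψg' (mem_image_of_mem g hx), hg'g hx]
  simp [hφg hx, this]

end Euclidean

theorem stmt_5_general (n s : ℕ) (L H : Submodule ℝ (E n))
    (hL : Module.finrank ℝ L = s) (hH : Module.finrank ℝ H = n - s)
    (X Y : Set (E n))
    (hXL : X ⊆ (L : Set (E n))) (hYH : Y ⊆ (H : Set (E n)))
    (f : E n → E n) (hfY : f '' X = Y) (hbi : IsBiLipschitzOn f X) :
    ∃ F : E n → E n, IsTame n F ∧ Function.Bijective F ∧
      IsBiLipschitzOn F (univ : Set (E n)) ∧ Set.EqOn F f X := by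
  have hsn : s ≤ n := by simpa [hL] using L.finrank_le
  obtain ⟨t, -, ht⟩ :=
    Finset.exists_subset_card_eq (s := (Finset.univ : Finset (Fin n))) (n := n - s) (by simp)
  obtain ⟨A, hAdet, hA⟩ := exists_det_eq_one_mapsTo_coordSubspace tᶜ L
    (by rw [Finset.card_compl, ht, Fintype.card_fin, hL]; omega)
  obtain ⟨B, hBdet, hB⟩ := exists_det_eq_one_mapsTo_coordSubspace t H (by rw [ht, hH])
  obtain ⟨F, hF, hFg⟩ := exists_isTameBiLipschitz_eqOn t (X := A '' X) (g := B ∘ f ∘ A.symm)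
    (by
      rintro _ ⟨x, hx, rfl⟩ i hi
      exact apply_eq_zero_of_mem_coordSubspace (hA (hXL hx)) (by simpa using hi))
    (by
      rintro _ ⟨x, hx, rfl⟩ i hi
      simpa using apply_eq_zero_of_mem_coordSubspace (hB (hYH (hfY ▸ mem_image_of_mem f hx))) hi)
    (B.isBiLipschitzOn_univ.comp (hbi.comp (A.symm.isBiLipschitzOn_univ.mono (subset_univ _))
      (by rintro _ ⟨x, hx, rfl⟩; simpa using hx)) (mapsTo_univ _ _))
  have hF' := (IsTameBiLipschitz.of_linearEquiv B.symm (by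
    rw [LinearEquiv.det_coe_symm, hBdet, inv_one])).comp (hF.comp (.of_linearEquiv A hAdet))
  exact ⟨_, hF'.isTame, hF'.bijective, hF'.isBiLipschitzOn,
    fun x hx => by simpa using congrArg B.symm (hFg (mem_image_of_mem A hx))⟩

/-- A bi-Lipschitz homeomorphism between closed sets lying in complementary-dimension
linear subspaces extends to a tame bi-Lipschitz homeomorphism of ℝⁿ. -/
theorem stmt_5 (n s : ℕ) (L H : Submodule ℝ (E n))
    (hL : Module.finrank ℝ L = s) (hH : Module.finrank ℝ H = n - s)
    (X Y : Set (E n)) (hXc : IsClosed X) (hYc : IsClosed Y)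
    (hXL : X ⊆ (L : Set (E n))) (hYH : Y ⊆ (H : Set (E n)))
    (f : E n → E n) (hfY : f '' X = Y) (hbi : IsBiLipschitzOn f X) :
    ∃ F : E n → E n, IsTame n F ∧ Function.Bijective F ∧
      IsBiLipschitzOn F (univ : Set (E n)) ∧ Set.EqOn F f X :=
  stmt_5_general n s L H hL hH X Y hXL hYH f hfY hbi
end
end
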